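/- The pushforward of ρ by T_μ equals μ, and T_μ minimizes the quadratic Monge cost: for every Borel map S : ℝ^d → ℝ^d whose pushforward of ρ equals μ, one has ∫ |x − S(x)|² dρ(x) ≥ ∫ |x − T_μ(x)|² dρ(x). -/

import Mathlib

open MeasureTheory Metric Set
open scoped ENNReal

namespace Stmt13Aux
variable {d : ℕ}

def gbox (J : Fin d → Set ℝ) : Set (EuclideanSpace ℝ (Fin d)) := {x | ∀ k, x k ∈ J k}

lemma gbox_eq_preimage (J : Fin d → Set ℝ) :
    gbox J = ((MeasurableEquiv.toLp 2 (Fin d → ℝ)).symm) ⁻¹' (Set.univ.pi J) := by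
  ext x; simp [gbox, Set.mem_pi]

lemma measurableSet_gbox (J : Fin d → Set ℝ) (hJ : ∀ k, MeasurableSet (J k)) :
    MeasurableSet (gbox J) := by
  rw [gbox_eq_preimage]
  exact ((MeasurableEquiv.toLp 2 (Fin d → ℝ)).symm).measurable (MeasurableSet.univ_pi hJ)

lemma volume_gbox (J : Fin d → Set ℝ) (hJ : ∀ k, MeasurableSet (J k)) :
    volume (gbox J) = ∏ k, volume (J k) := by
  rw [gbox_eq_preimage, (EuclideanSpace.volume_preserving_symm_measurableEquiv_toLp (Fin d)).measure_preimage
    (MeasurableSet.univ_pi hJ).nullMeasurableSet, volume_pi_pi]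

lemma abs_coord_sub_le_dist (x y : EuclideanSpace ℝ (Fin d)) (k : Fin d) :
    |x k - y k| ≤ dist x y := by
  rw [EuclideanSpace.dist_eq]
  rw [show |x k - y k| = Real.sqrt ((x k - y k)^2) from (Real.sqrt_sq_eq_abs _).symm]
  apply Real.sqrt_le_sqrt
  have := Finset.single_le_sum (f := fun i => dist (x i) (y i) ^ 2)
    (fun i _ => sq_nonneg _) (Finset.mem_univ k)
  simpa [Real.dist_eq, sq_abs] using this

lemma continuous_coord (k : Fin d) : Continuous (fun x : EuclideanSpace ℝ (Fin d) => x k) :=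
  (EuclideanSpace.proj (𝕜 := ℝ) k).continuous

lemma isClosed_gbox (J : Fin d → Set ℝ) (hJ : ∀ k, IsClosed (J k)) : IsClosed (gbox J) := by
  have : gbox J = ⋂ k, (fun x : EuclideanSpace ℝ (Fin d) => x k) ⁻¹' (J k) := by
    ext x; simp [gbox]
  rw [this]
  exact isClosed_iInter fun k => (hJ k).preimage (continuous_coord k)

lemma arith1 {Mi a b c e : ℝ} (hMi : 0 < Mi) (h1 : |a| ≤ 2*Mi) (h2 : |b| ≤ Mi)
    (h3 : 98*Mi ≤ |c|) : a^2 + b^2 ≤ c^2 + e^2 := by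
  have ha : a^2 ≤ (2*Mi)^2 := by rw [← sq_abs]; exact pow_le_pow_left₀ (abs_nonneg a) h1 2
  have hb : b^2 ≤ Mi^2 := by rw [← sq_abs]; exact pow_le_pow_left₀ (abs_nonneg b) h2 2
  have hc : (98*Mi)^2 ≤ c^2 := by
    rw [← sq_abs c]; exact pow_le_pow_left₀ (by positivity) h3 2
  nlinarith [sq_nonneg e, sq_nonneg Mi]

lemma prod_pair_one {i0 i1 : Fin d} (h : i0 ≠ i1) (f : Fin d → ℝ≥0∞)
    (hf : ∀ k, k ≠ i0 → k ≠ i1 → f k = 1) : ∏ k, f k = f i0 * f i1 := by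
  rw [← Finset.prod_subset (Finset.subset_univ {i0, i1}) (fun x _ hx => by
    simp only [Finset.mem_insert, Finset.mem_singleton] at hx
    push_neg at hx
    exact hf x hx.1 hx.2)]
  exact Finset.prod_pair h

lemma arith2 {b wj : ℝ} (hw : 0 < wj) (hb : 0 ≤ b) (A : ℝ) :
    A + (b - wj)^2 ≤ A + (b - -wj)^2 := by nlinarith

lemma arith3 {b wj : ℝ} (hw : 0 < wj) (hb : b ≤ 0) (A : ℝ) :
    A + (b - -wj)^2 ≤ A + (b - wj)^2 := by nlinarith

end Stmt13Aux
set_option maxHeartbeats 3200000 in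
open Stmt13Aux in
/-- The map `T_μ`, sending each point of `S_i` with `x₂ ≥ 0` to `B_i^+` and each point of
`S_i` with `x₂ < 0` to `B_i^-`, pushes `ρ` forward to `μ = Σ σ_i (δ_{B_i^+} + δ_{B_i^-})`
and minimizes the quadratic Monge cost among all transport maps from `ρ` to `μ`. -/
theorem stmt13 (d : ℕ) (hd : 2 ≤ d)
    (ℓ r w u : ℕ → ℝ)
    (hℓ : ∀ i, 0 < ℓ i) (hr : ∀ i, 0 < r i) (hw : ∀ i, 0 < w i)
    (hsep : ∀ i, 100 * max (ℓ i) (max (r i) (w i)) ≤ u (i + 1) - u i)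
    (hsep' : ∀ i, 100 * max (ℓ (i + 1)) (max (r (i + 1)) (w (i + 1))) ≤ u (i + 1) - u i)
    (hwr : ∀ i, 100 * r i ≤ w i)
    (Q : ℝ → ℝ → Set (EuclideanSpace ℝ (Fin d)))
    (hQ : ∀ L R : ℝ, Q L R = {x : EuclideanSpace ℝ (Fin d) |
      0 < x ⟨0, by omega⟩ ∧ x ⟨0, by omega⟩ < L ∧ |x ⟨1, by omega⟩| < R / 2 ∧
      ∀ j : Fin d, 2 ≤ (j : ℕ) → |x j| < 1 / 2})
    (Ap Am Bp Bm : ℕ → EuclideanSpace ℝ (Fin d))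
    (hAp : ∀ i, Ap i = EuclideanSpace.single (⟨0, by omega⟩ : Fin d) (u i + w i))
    (hAm : ∀ i, Am i = EuclideanSpace.single (⟨0, by omega⟩ : Fin d) (u i - w i))
    (hBp : ∀ i, Bp i = EuclideanSpace.single (⟨0, by omega⟩ : Fin d) (u i) +
      EuclideanSpace.single (⟨1, by omega⟩ : Fin d) (w i))
    (hBm : ∀ i, Bm i = EuclideanSpace.single (⟨0, by omega⟩ : Fin d) (u i) -
      EuclideanSpace.single (⟨1, by omega⟩ : Fin d) (w i))
    (S : ℕ → Set (EuclideanSpace ℝ (Fin d)))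
    (hS : ∀ i, S i =
      (fun q => Ap i + q) '' Q (ℓ i) (r i) ∪ (fun q => Am i - q) '' Q (ℓ i) (r i))
    (X : Set (EuclideanSpace ℝ (Fin d))) (hX : X = ⋃ i, S i)
    (ρ : Measure (EuclideanSpace ℝ (Fin d))) (hprob : IsProbabilityMeasure ρ)
    (g : EuclideanSpace ℝ (Fin d) → ℝ≥0∞) (hgmeas : Measurable g)
    (hρ : ρ = volume.withDensity g)
    (hgsupp : ∀ x ∉ closure X, g x = 0)
    (hgconst : ∀ i, ∃ c : ℝ≥0∞, ∀ x ∈ S i, g x = c)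
    (σ : ℕ → ℝ≥0∞) (hσ : ∀ i, σ i = ρ ((fun q => Ap i + q) '' Q (ℓ i) (r i)))
    (μ : Measure (EuclideanSpace ℝ (Fin d)))
    (hμ : μ = Measure.sum fun i => σ i • (Measure.dirac (Bp i) + Measure.dirac (Bm i)))
    (T : EuclideanSpace ℝ (Fin d) → EuclideanSpace ℝ (Fin d))
    (hTmeas : Measurable T)
    (hT : ∀ i, ∀ x ∈ S i, T x = if 0 ≤ x ⟨1, by omega⟩ then Bp i else Bm i) :
    ρ.map T = μ ∧
    ∀ S' : EuclideanSpace ℝ (Fin d) → EuclideanSpace ℝ (Fin d),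
      Measurable S' → ρ.map S' = μ →
      ∫⁻ x, ENNReal.ofReal (dist x (T x) ^ 2) ∂ρ ≤
        ∫⁻ x, ENNReal.ofReal (dist x (S' x) ^ 2) ∂ρ := by
  classical
  -- ### Setup
  set i0 : Fin d := ⟨0, by omega⟩ with hi0
  set i1 : Fin d := ⟨1, by omega⟩ with hi1
  have hne : i0 ≠ i1 := by simp [hi0, hi1, Fin.ext_iff]
  set M : ℕ → ℝ := fun i => max (ℓ i) (max (r i) (w i)) with hM
  have hMi : ∀ i, M i = max (ℓ i) (max (r i) (w i)) := fun i => by rw [hM]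
  have hℓM : ∀ i, ℓ i ≤ M i := fun i => by rw [hMi]; exact le_max_left _ _
  have hrM : ∀ i, r i ≤ M i := fun i => by
    rw [hMi]; exact le_trans (le_max_left _ _) (le_max_right _ _)
  have hwM : ∀ i, w i ≤ M i := fun i => by
    rw [hMi]; exact le_trans (le_max_right _ _) (le_max_right _ _)
  have hM0 : ∀ i, 0 < M i := fun i => lt_of_lt_of_le (hℓ i) (hℓM i)
  have hsepM : ∀ i, 100 * M i ≤ u (i + 1) - u i := fun i => by rw [hMi]; exact hsep i
  have hsepM' : ∀ i, 100 * M (i + 1) ≤ u (i + 1) - u i := fun i => by rw [hMi]; exact hsep' i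
  have humono : StrictMono u := by
    apply strictMono_nat_of_lt_succ
    intro i
    have h1 := hsepM i
    have h2 := hM0 i
    linarith
  have husep : ∀ i j, i < j → 100 * max (M i) (M j) ≤ u j - u i := by
    intro i j hij
    obtain ⟨k, rfl⟩ : ∃ k, j = k + 1 := ⟨j - 1, by omega⟩
    have h1 : u i ≤ u k := humono.monotone (by omega)
    have h2 : u (i+1) ≤ u (k+1) := humono.monotone (by omega)
    have h3 := hsepM i
    have h4 := hsepM' k
    rcases max_cases (M i) (M (k+1)) with ⟨heq, _⟩ | ⟨heq, _⟩ <;> rw [heq] <;> linarith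
  -- coordinates of the centers
  have hApco : ∀ i (k : Fin d), Ap i k = if k = i0 then u i + w i else 0 := by
    intro i k; rw [hAp i]; exact EuclideanSpace.single_apply _ _ _
  have hAmco : ∀ i (k : Fin d), Am i k = if k = i0 then u i - w i else 0 := by
    intro i k; rw [hAm i]; exact EuclideanSpace.single_apply _ _ _
  have hBpco : ∀ i (k : Fin d), Bp i k = if k = i0 then u i else if k = i1 then w i else 0 := by
    intro i k
    rw [hBp i]
    rw [show (EuclideanSpace.single i0 (u i) + EuclideanSpace.single i1 (w i)) k
      = EuclideanSpace.single i0 (u i) k + EuclideanSpace.single i1 (w i) k from rfl]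
    rw [EuclideanSpace.single_apply, EuclideanSpace.single_apply]
    by_cases h0 : k = i0
    · subst h0; simp [hne]
    · by_cases h1 : k = i1 <;> simp [h0, h1, Ne.symm hne]
  have hBmco : ∀ i (k : Fin d), Bm i k = if k = i0 then u i else if k = i1 then -w i else 0 := by
    intro i k
    rw [hBm i]
    rw [show (EuclideanSpace.single i0 (u i) - EuclideanSpace.single i1 (w i)) k
      = EuclideanSpace.single i0 (u i) k - EuclideanSpace.single i1 (w i) k from rfl]
    rw [EuclideanSpace.single_apply, EuclideanSpace.single_apply]
    by_cases h0 : k = i0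
    · subst h0; simp [hne]
    · by_cases h1 : k = i1 <;> simp [h0, h1, Ne.symm hne]
  -- membership in the two boxes
  have hQco : ∀ L R (y : EuclideanSpace ℝ (Fin d)), y ∈ Q L R ↔
      (0 < y i0 ∧ y i0 < L ∧ |y i1| < R/2 ∧ ∀ j : Fin d, 2 ≤ (j : ℕ) → |y j| < 1/2) := by
    intro L R y; rw [hQ]; exact Iff.rfl
  have hval : ∀ k : Fin d, k ≠ i0 → k ≠ i1 → 2 ≤ (k : ℕ) := by
    intro k h0 h1
    have : (k : ℕ) ≠ 0 := fun h => h0 (Fin.ext h)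
    have : (k : ℕ) ≠ 1 := fun h => h1 (Fin.ext h)
    omega
  have hval2 : ∀ k : Fin d, 2 ≤ (k : ℕ) → k ≠ i0 ∧ k ≠ i1 := by
    intro k hk
    constructor
    · rintro rfl; rw [hi0] at hk; norm_num at hk
    · rintro rfl; rw [hi1] at hk; norm_num at hk
  have hPpmem : ∀ i (x : EuclideanSpace ℝ (Fin d)), x ∈ (fun q => Ap i + q) '' Q (ℓ i) (r i) ↔
      (x i0 ∈ Ioo (u i + w i) (u i + w i + ℓ i) ∧ x i1 ∈ Ioo (-(r i)/2) (r i/2) ∧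
        ∀ k : Fin d, k ≠ i0 → k ≠ i1 → x k ∈ Ioo (-(1:ℝ)/2) (1/2)) := by
    intro i x
    constructor
    · rintro ⟨q, hq, rfl⟩
      beta_reduce
      rw [hQco] at hq
      obtain ⟨h0, h1, h2, h3⟩ := hq
      rw [abs_lt] at h2
      have hc : ∀ k, (Ap i + q) k = Ap i k + q k := fun k => rfl
      refine ⟨?_, ?_, ?_⟩
      · rw [hc, hApco, if_pos rfl]; exact ⟨by linarith, by linarith⟩
      · rw [hc, hApco, if_neg (Ne.symm hne)]; exact ⟨by linarith, by linarith⟩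
      · intro k hk0 hk1
        have h4 := h3 k (hval k hk0 hk1)
        rw [abs_lt] at h4
        rw [hc, hApco, if_neg hk0]
        exact ⟨by linarith, by linarith⟩
    · rintro ⟨h0, h1, h2⟩
      refine ⟨x - Ap i, ?_, by simp⟩
      rw [hQco]
      have hc : ∀ k, (x - Ap i) k = x k - Ap i k := fun k => rfl
      obtain ⟨h0a, h0b⟩ := h0
      obtain ⟨h1a, h1b⟩ := h1
      refine ⟨?_, ?_, ?_, ?_⟩
      · rw [hc, hApco, if_pos rfl]; linarith
      · rw [hc, hApco, if_pos rfl]; linarith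
      · rw [hc, hApco, if_neg (Ne.symm hne), abs_lt]; exact ⟨by linarith, by linarith⟩
      · intro j hj
        obtain ⟨hj0, hj1⟩ := hval2 j hj
        have h4 := h2 j hj0 hj1
        obtain ⟨h4a, h4b⟩ := h4
        rw [hc, hApco, if_neg hj0, abs_lt]
        exact ⟨by linarith, by linarith⟩
  have hPmmem : ∀ i (x : EuclideanSpace ℝ (Fin d)), x ∈ (fun q => Am i - q) '' Q (ℓ i) (r i) ↔
      (x i0 ∈ Ioo (u i - w i - ℓ i) (u i - w i) ∧ x i1 ∈ Ioo (-(r i)/2) (r i/2) ∧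
        ∀ k : Fin d, k ≠ i0 → k ≠ i1 → x k ∈ Ioo (-(1:ℝ)/2) (1/2)) := by
    intro i x
    constructor
    · rintro ⟨q, hq, rfl⟩
      beta_reduce
      rw [hQco] at hq
      obtain ⟨h0, h1, h2, h3⟩ := hq
      rw [abs_lt] at h2
      have hc : ∀ k, (Am i - q) k = Am i k - q k := fun k => rfl
      refine ⟨?_, ?_, ?_⟩
      · rw [hc, hAmco, if_pos rfl]; exact ⟨by linarith, by linarith⟩
      · rw [hc, hAmco, if_neg (Ne.symm hne)]; exact ⟨by linarith, by linarith⟩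
      · intro k hk0 hk1
        have h4 := h3 k (hval k hk0 hk1)
        rw [abs_lt] at h4
        rw [hc, hAmco, if_neg hk0]
        exact ⟨by linarith, by linarith⟩
    · rintro ⟨h0, h1, h2⟩
      refine ⟨Am i - x, ?_, by simp⟩
      rw [hQco]
      have hc : ∀ k, (Am i - x) k = Am i k - x k := fun k => rfl
      obtain ⟨h0a, h0b⟩ := h0
      obtain ⟨h1a, h1b⟩ := h1
      refine ⟨?_, ?_, ?_, ?_⟩
      · rw [hc, hAmco, if_pos rfl]; linarith
      · rw [hc, hAmco, if_pos rfl]; linarith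
      · rw [hc, hAmco, if_neg (Ne.symm hne), abs_lt]; exact ⟨by linarith, by linarith⟩
      · intro j hj
        obtain ⟨hj0, hj1⟩ := hval2 j hj
        have h4 := h2 j hj0 hj1
        obtain ⟨h4a, h4b⟩ := h4
        rw [hc, hAmco, if_neg hj0, abs_lt]
        exact ⟨by linarith, by linarith⟩
  -- ### generic boxes
  have hgb : ∀ (I0 I1 I2 : Set ℝ),
      {x : EuclideanSpace ℝ (Fin d) | x i0 ∈ I0 ∧ x i1 ∈ I1 ∧
        ∀ k, k ≠ i0 → k ≠ i1 → x k ∈ I2}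
      = gbox (fun k => if k = i0 then I0 else if k = i1 then I1 else I2) := by
    intro I0 I1 I2
    ext x
    constructor
    · rintro ⟨h0, h1, h2⟩ k
      by_cases hk0 : k = i0
      · subst hk0; simpa using h0
      · by_cases hk1 : k = i1
        · subst hk1; simp only [if_neg (Ne.symm hne), if_pos rfl]; exact h1
        · simp only [if_neg hk0, if_neg hk1]; exact h2 k hk0 hk1
    · intro h
      have h' : ∀ k, x k ∈ (if k = i0 then I0 else if k = i1 then I1 else I2) := h
      refine ⟨?_, ?_, ?_⟩
      · have := h' i0; rwa [if_pos rfl] at this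
      · have := h' i1; rwa [if_neg (Ne.symm hne), if_pos rfl] at this
      · intro k hk0 hk1; have := h' k; rwa [if_neg hk0, if_neg hk1] at this
  have hbox : ∀ (I0 I1 I2 : Set ℝ), MeasurableSet I0 → MeasurableSet I1 → MeasurableSet I2 →
      volume I2 = 1 →
      MeasurableSet {x : EuclideanSpace ℝ (Fin d) | x i0 ∈ I0 ∧ x i1 ∈ I1 ∧
        ∀ k, k ≠ i0 → k ≠ i1 → x k ∈ I2} ∧
      volume {x : EuclideanSpace ℝ (Fin d) | x i0 ∈ I0 ∧ x i1 ∈ I1 ∧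
        ∀ k, k ≠ i0 → k ≠ i1 → x k ∈ I2} = volume I0 * volume I1 := by
    intro I0 I1 I2 m0 m1 m2 v2
    rw [hgb]
    have hJm : ∀ k, MeasurableSet (if k = i0 then I0 else if k = i1 then I1 else I2) := by
      intro k; split_ifs <;> assumption
    refine ⟨measurableSet_gbox _ hJm, ?_⟩
    rw [volume_gbox _ hJm,
      prod_pair_one hne _ (fun k hk0 hk1 => by rw [if_neg hk0, if_neg hk1]; exact v2),
      if_pos rfl, if_neg (Ne.symm hne), if_pos rfl]
  have hI2vol : volume (Ioo (-(1:ℝ)/2) (1/2)) = 1 := by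
    rw [Real.volume_Ioo]; norm_num
  -- ### measure computations
  choose c hc using hgconst
  have hρsub : ∀ i (A : Set (EuclideanSpace ℝ (Fin d))), MeasurableSet A → A ⊆ S i →
      ρ A = c i * volume A := by
    intro i A hA hsub
    rw [hρ, withDensity_apply _ hA,
      setLIntegral_congr_fun_ae hA (ae_of_all _ fun x hx => hc i x (hsub hx)),
      setLIntegral_const]
  have hPpeq : ∀ i, (fun q => Ap i + q) '' Q (ℓ i) (r i) = {x : EuclideanSpace ℝ (Fin d) | x i0 ∈ Ioo (u i + w i) (u i + w i + ℓ i) ∧ x i1 ∈ Ioo (-(r i)/2) (r i/2) ∧ ∀ k, k ≠ i0 → k ≠ i1 → x k ∈ Ioo (-(1:ℝ)/2) (1/2)} :=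
    fun i => Set.ext fun x => hPpmem i x
  have hPmeq : ∀ i, (fun q => Am i - q) '' Q (ℓ i) (r i) = {x : EuclideanSpace ℝ (Fin d) | x i0 ∈ Ioo (u i - w i - ℓ i) (u i - w i) ∧ x i1 ∈ Ioo (-(r i)/2) (r i/2) ∧ ∀ k, k ≠ i0 → k ≠ i1 → x k ∈ Ioo (-(1:ℝ)/2) (1/2)} :=
    fun i => Set.ext fun x => hPmmem i x
  set Hs : Set (EuclideanSpace ℝ (Fin d)) := {x | 0 ≤ x i1} with hHs
  have hHm : MeasurableSet Hs :=
    measurableSet_le measurable_const ((continuous_coord i1).measurable)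
  have hinterH : ∀ (I0 : Set ℝ) i,
      {x : EuclideanSpace ℝ (Fin d) | x i0 ∈ I0 ∧ x i1 ∈ Ioo (-(r i)/2) (r i/2) ∧ ∀ k, k ≠ i0 → k ≠ i1 → x k ∈ Ioo (-(1:ℝ)/2) (1/2)} ∩ Hs = {x : EuclideanSpace ℝ (Fin d) | x i0 ∈ I0 ∧ x i1 ∈ Ico 0 (r i/2) ∧ ∀ k, k ≠ i0 → k ≠ i1 → x k ∈ Ioo (-(1:ℝ)/2) (1/2)} := by
    intro I0 i
    ext x
    constructor
    · rintro ⟨⟨a, ⟨b1, b2⟩, cc⟩, hx⟩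
      exact ⟨a, ⟨hx, b2⟩, cc⟩
    · rintro ⟨a, ⟨b1, b2⟩, cc⟩
      exact ⟨⟨a, ⟨by have := hr i; linarith, b2⟩, cc⟩, b1⟩
  have hinterHc : ∀ (I0 : Set ℝ) i,
      {x : EuclideanSpace ℝ (Fin d) | x i0 ∈ I0 ∧ x i1 ∈ Ioo (-(r i)/2) (r i/2) ∧ ∀ k, k ≠ i0 → k ≠ i1 → x k ∈ Ioo (-(1:ℝ)/2) (1/2)} \ Hs = {x : EuclideanSpace ℝ (Fin d) | x i0 ∈ I0 ∧ x i1 ∈ Ioo (-(r i)/2) 0 ∧ ∀ k, k ≠ i0 → k ≠ i1 → x k ∈ Ioo (-(1:ℝ)/2) (1/2)} := by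
    intro I0 i
    ext x
    constructor
    · rintro ⟨⟨a, ⟨b1, b2⟩, cc⟩, hx⟩
      exact ⟨a, ⟨b1, not_le.mp hx⟩, cc⟩
    · rintro ⟨a, ⟨b1, b2⟩, cc⟩
      exact ⟨⟨a, ⟨b1, by have := hr i; linarith⟩, cc⟩, not_le.mpr b2⟩
  have hPpm : ∀ i, MeasurableSet ((fun q => Ap i + q) '' Q (ℓ i) (r i)) := fun i => by
    rw [hPpeq i]
    exact (hbox _ _ _ measurableSet_Ioo measurableSet_Ioo measurableSet_Ioo hI2vol).1
  have hPmm : ∀ i, MeasurableSet ((fun q => Am i - q) '' Q (ℓ i) (r i)) := fun i => by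
    rw [hPmeq i]
    exact (hbox _ _ _ measurableSet_Ioo measurableSet_Ioo measurableSet_Ioo hI2vol).1
  have hSm : ∀ i, MeasurableSet (S i) := fun i => by
    rw [hS i]; exact (hPpm i).union (hPmm i)
  have hPpvol : ∀ i, volume ((fun q => Ap i + q) '' Q (ℓ i) (r i)) =
      ENNReal.ofReal (ℓ i) * ENNReal.ofReal (r i) := by
    intro i
    rw [hPpeq i,
      (hbox _ _ _ measurableSet_Ioo measurableSet_Ioo measurableSet_Ioo hI2vol).2,
      Real.volume_Ioo, Real.volume_Ioo,
      show u i + w i + ℓ i - (u i + w i) = ℓ i by ring,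
      show r i/2 - -(r i)/2 = r i by ring]
  have hσval : ∀ i, σ i = c i * (ENNReal.ofReal (ℓ i) * ENNReal.ofReal (r i)) := by
    intro i
    rw [hσ i, hρsub i _ (hPpm i) (by rw [hS i]; exact subset_union_left), hPpvol i]
  have hrhalf : ∀ i, ENNReal.ofReal (r i) = ENNReal.ofReal (r i/2) + ENNReal.ofReal (r i/2) := by
    intro i
    rw [← ENNReal.ofReal_add (by have := hr i; linarith) (by have := hr i; linarith)]
    congr 1; ring
  have hhalfH : ∀ i, ρ (S i ∩ Hs) = σ i := by
    intro i
    have e1 : S i ∩ Hs = {x : EuclideanSpace ℝ (Fin d) | x i0 ∈ Ioo (u i + w i) (u i + w i + ℓ i) ∧ x i1 ∈ Ico 0 (r i/2) ∧ ∀ k, k ≠ i0 → k ≠ i1 → x k ∈ Ioo (-(1:ℝ)/2) (1/2)} ∪ {x : EuclideanSpace ℝ (Fin d) | x i0 ∈ Ioo (u i - w i - ℓ i) (u i - w i) ∧ x i1 ∈ Ico 0 (r i/2) ∧ ∀ k, k ≠ i0 → k ≠ i1 → x k ∈ Ioo (-(1:ℝ)/2) (1/2)} := by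
      rw [hS i, union_inter_distrib_right, hPpeq i, hPmeq i, hinterH _ i, hinterH _ i]
    have hb1 := hbox (Ioo (u i + w i) (u i + w i + ℓ i)) (Ico 0 (r i/2)) (Ioo (-(1:ℝ)/2) (1/2))
      measurableSet_Ioo measurableSet_Ico measurableSet_Ioo hI2vol
    have hb2 := hbox (Ioo (u i - w i - ℓ i) (u i - w i)) (Ico 0 (r i/2)) (Ioo (-(1:ℝ)/2) (1/2))
      measurableSet_Ioo measurableSet_Ico measurableSet_Ioo hI2vol
    have hsub1 : {x : EuclideanSpace ℝ (Fin d) | x i0 ∈ Ioo (u i + w i) (u i + w i + ℓ i) ∧ x i1 ∈ Ico 0 (r i/2) ∧ ∀ k, k ≠ i0 → k ≠ i1 → x k ∈ Ioo (-(1:ℝ)/2) (1/2)} ⊆ S i := by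
      rw [hS i]
      intro x hx
      left
      rw [hPpeq i]
      exact ⟨hx.1, ⟨by have := hr i; have := hx.2.1.1; linarith, hx.2.1.2⟩, hx.2.2⟩
    have hsub2 : {x : EuclideanSpace ℝ (Fin d) | x i0 ∈ Ioo (u i - w i - ℓ i) (u i - w i) ∧ x i1 ∈ Ico 0 (r i/2) ∧ ∀ k, k ≠ i0 → k ≠ i1 → x k ∈ Ioo (-(1:ℝ)/2) (1/2)} ⊆ S i := by
      rw [hS i]
      intro x hx
      right
      rw [hPmeq i]
      exact ⟨hx.1, ⟨by have := hr i; have := hx.2.1.1; linarith, hx.2.1.2⟩, hx.2.2⟩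
    have hd12 : Disjoint {x : EuclideanSpace ℝ (Fin d) | x i0 ∈ Ioo (u i + w i) (u i + w i + ℓ i) ∧ x i1 ∈ Ico 0 (r i/2) ∧ ∀ k, k ≠ i0 → k ≠ i1 → x k ∈ Ioo (-(1:ℝ)/2) (1/2)} {x : EuclideanSpace ℝ (Fin d) | x i0 ∈ Ioo (u i - w i - ℓ i) (u i - w i) ∧ x i1 ∈ Ico 0 (r i/2) ∧ ∀ k, k ≠ i0 → k ≠ i1 → x k ∈ Ioo (-(1:ℝ)/2) (1/2)} := by
      rw [Set.disjoint_left]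
      rintro x ⟨a1, -, -⟩ ⟨a2, -, -⟩
      have := hw i
      have h1 := a1.1
      have h2 := a2.2
      linarith
    rw [e1, measure_union hd12 hb2.1, hρsub i _ hb1.1 hsub1, hρsub i _ hb2.1 hsub2,
      hb1.2, hb2.2, hσval i, Real.volume_Ioo, Real.volume_Ioo, Real.volume_Ico,
      show u i + w i + ℓ i - (u i + w i) = ℓ i by ring,
      show u i - w i - (u i - w i - ℓ i) = ℓ i by ring,
      show r i/2 - 0 = r i/2 by ring, hrhalf i]
    ring
  have hhalfHc : ∀ i, ρ (S i \ Hs) = σ i := by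
    intro i
    have e1 : S i \ Hs = {x : EuclideanSpace ℝ (Fin d) | x i0 ∈ Ioo (u i + w i) (u i + w i + ℓ i) ∧ x i1 ∈ Ioo (-(r i)/2) 0 ∧ ∀ k, k ≠ i0 → k ≠ i1 → x k ∈ Ioo (-(1:ℝ)/2) (1/2)} ∪ {x : EuclideanSpace ℝ (Fin d) | x i0 ∈ Ioo (u i - w i - ℓ i) (u i - w i) ∧ x i1 ∈ Ioo (-(r i)/2) 0 ∧ ∀ k, k ≠ i0 → k ≠ i1 → x k ∈ Ioo (-(1:ℝ)/2) (1/2)} := by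
      rw [hS i, union_diff_distrib, hPpeq i, hPmeq i, hinterHc _ i, hinterHc _ i]
    have hb1 := hbox (Ioo (u i + w i) (u i + w i + ℓ i)) (Ioo (-(r i)/2) 0) (Ioo (-(1:ℝ)/2) (1/2))
      measurableSet_Ioo measurableSet_Ioo measurableSet_Ioo hI2vol
    have hb2 := hbox (Ioo (u i - w i - ℓ i) (u i - w i)) (Ioo (-(r i)/2) 0) (Ioo (-(1:ℝ)/2) (1/2))
      measurableSet_Ioo measurableSet_Ioo measurableSet_Ioo hI2vol
    have hsub1 : {x : EuclideanSpace ℝ (Fin d) | x i0 ∈ Ioo (u i + w i) (u i + w i + ℓ i) ∧ x i1 ∈ Ioo (-(r i)/2) 0 ∧ ∀ k, k ≠ i0 → k ≠ i1 → x k ∈ Ioo (-(1:ℝ)/2) (1/2)} ⊆ S i := by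
      rw [hS i]
      intro x hx
      left
      rw [hPpeq i]
      exact ⟨hx.1, ⟨hx.2.1.1, by have := hr i; have := hx.2.1.2; linarith⟩, hx.2.2⟩
    have hsub2 : {x : EuclideanSpace ℝ (Fin d) | x i0 ∈ Ioo (u i - w i - ℓ i) (u i - w i) ∧ x i1 ∈ Ioo (-(r i)/2) 0 ∧ ∀ k, k ≠ i0 → k ≠ i1 → x k ∈ Ioo (-(1:ℝ)/2) (1/2)} ⊆ S i := by
      rw [hS i]
      intro x hx
      right
      rw [hPmeq i]
      exact ⟨hx.1, ⟨hx.2.1.1, by have := hr i; have := hx.2.1.2; linarith⟩, hx.2.2⟩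
    have hd12 : Disjoint {x : EuclideanSpace ℝ (Fin d) | x i0 ∈ Ioo (u i + w i) (u i + w i + ℓ i) ∧ x i1 ∈ Ioo (-(r i)/2) 0 ∧ ∀ k, k ≠ i0 → k ≠ i1 → x k ∈ Ioo (-(1:ℝ)/2) (1/2)} {x : EuclideanSpace ℝ (Fin d) | x i0 ∈ Ioo (u i - w i - ℓ i) (u i - w i) ∧ x i1 ∈ Ioo (-(r i)/2) 0 ∧ ∀ k, k ≠ i0 → k ≠ i1 → x k ∈ Ioo (-(1:ℝ)/2) (1/2)} := by
      rw [Set.disjoint_left]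
      rintro x ⟨a1, -, -⟩ ⟨a2, -, -⟩
      have := hw i
      have h1 := a1.1
      have h2 := a2.2
      linarith
    rw [e1, measure_union hd12 hb2.1, hρsub i _ hb1.1 hsub1, hρsub i _ hb2.1 hsub2,
      hb1.2, hb2.2, hσval i, Real.volume_Ioo, Real.volume_Ioo, Real.volume_Ioo,
      show u i + w i + ℓ i - (u i + w i) = ℓ i by ring,
      show u i - w i - (u i - w i - ℓ i) = ℓ i by ring,
      show (0:ℝ) - -(r i)/2 = r i/2 by ring, hrhalf i]
    ring
  -- ### coordinate bounds and disjointness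
  have hSco : ∀ i (x : EuclideanSpace ℝ (Fin d)), x ∈ S i →
      |x i0 - u i| ≤ 2 * M i ∧ |x i1| ≤ r i / 2 := by
    intro i x hx
    rw [hS i] at hx
    have hℓM' := hℓM i
    have hwM' := hwM i
    rcases hx with hx | hx
    · obtain ⟨⟨a1, a2⟩, ⟨b1, b2⟩, -⟩ := (hPpmem i x).mp hx
      constructor
      · rw [abs_le]; constructor <;> linarith [hw i, hℓ i]
      · rw [abs_le]; constructor <;> linarith
    · obtain ⟨⟨a1, a2⟩, ⟨b1, b2⟩, -⟩ := (hPmmem i x).mp hx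
      constructor
      · rw [abs_le]; constructor <;> linarith [hw i, hℓ i]
      · rw [abs_le]; constructor <;> linarith
  have husep2 : ∀ i j, i ≠ j → 100 * M i ≤ |u j - u i| := by
    intro i j hij
    rcases lt_or_gt_of_ne hij with h | h
    · have := husep i j h
      have h2 : M i ≤ max (M i) (M j) := le_max_left _ _
      rw [abs_of_nonneg (by linarith [hM0 i, hM0 j, le_max_right (M i) (M j)])]
      linarith
    · have := husep j i h
      have h2 : M i ≤ max (M j) (M i) := le_max_right _ _
      rw [abs_of_nonpos (by linarith [hM0 i, hM0 j, le_max_left (M j) (M i)])]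
      linarith
  have hdisjS : ∀ i j, i ≠ j → Disjoint (S i) (S j) := by
    intro i j hij
    rw [Set.disjoint_left]
    intro x hxi hxj
    have h1 := (hSco i x hxi).1
    have h2 := (hSco j x hxj).1
    have h3 := husep2 i j hij
    have h4 : |u j - u i| ≤ |x i0 - u i| + |x i0 - u j| := by
      have := abs_sub_abs_le_abs_sub (u j - u i) (x i0 - u i)
      have h5 := abs_sub (u j - u i) (x i0 - u i)
      calc |u j - u i| = |(x i0 - u i) - (x i0 - u j)| := by ring_nf
        _ ≤ |x i0 - u i| + |x i0 - u j| := abs_sub _ _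
    have h6 := husep2 j i hij.symm
    have h7 : |u i - u j| = |u j - u i| := abs_sub_comm _ _
    have := hM0 i; have := hM0 j
    linarith [h6, h7 ▸ h6]
  -- ### the set X has full measure
  have hXm : MeasurableSet X := by
    rw [hX]; exact MeasurableSet.iUnion fun i => hSm i
  have hXnull : ρ Xᶜ = 0 := by
    have hclXm : MeasurableSet (closure X) := isClosed_closure.measurableSet
    have h1 : ρ ((closure X)ᶜ) = 0 := by
      rw [hρ, withDensity_apply _ hclXm.compl,
        setLIntegral_congr_fun_ae hclXm.compl (ae_of_all _ fun x hx => hgsupp x hx)]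
      simp
    have hIccvol : volume (Icc (-(1:ℝ)/2) (1/2)) = 1 := by
      rw [Real.volume_Icc]; norm_num
    -- closed boxes
    have hKclosed : ∀ i, IsClosed ({x : EuclideanSpace ℝ (Fin d) | x i0 ∈ Icc (u i + w i) (u i + w i + ℓ i) ∧ x i1 ∈ Icc (-(r i)/2) (r i/2) ∧ ∀ k, k ≠ i0 → k ≠ i1 → x k ∈ Icc (-(1:ℝ)/2) (1/2)} ∪ {x : EuclideanSpace ℝ (Fin d) | x i0 ∈ Icc (u i - w i - ℓ i) (u i - w i) ∧ x i1 ∈ Icc (-(r i)/2) (r i/2) ∧ ∀ k, k ≠ i0 → k ≠ i1 → x k ∈ Icc (-(1:ℝ)/2) (1/2)}) := by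
      intro i
      apply IsClosed.union <;>
      · rw [hgb]
        apply isClosed_gbox
        intro k
        split_ifs <;> exact isClosed_Icc
    have hsubKp : ∀ i, (fun q => Ap i + q) '' Q (ℓ i) (r i) ⊆ {x : EuclideanSpace ℝ (Fin d) | x i0 ∈ Icc (u i + w i) (u i + w i + ℓ i) ∧ x i1 ∈ Icc (-(r i)/2) (r i/2) ∧ ∀ k, k ≠ i0 → k ≠ i1 → x k ∈ Icc (-(1:ℝ)/2) (1/2)} := by
      intro i x hx
      rw [hPpeq i] at hx
      exact ⟨Ioo_subset_Icc_self hx.1, Ioo_subset_Icc_self hx.2.1,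
        fun k h0 h1 => Ioo_subset_Icc_self (hx.2.2 k h0 h1)⟩
    have hsubKm : ∀ i, (fun q => Am i - q) '' Q (ℓ i) (r i) ⊆ {x : EuclideanSpace ℝ (Fin d) | x i0 ∈ Icc (u i - w i - ℓ i) (u i - w i) ∧ x i1 ∈ Icc (-(r i)/2) (r i/2) ∧ ∀ k, k ≠ i0 → k ≠ i1 → x k ∈ Icc (-(1:ℝ)/2) (1/2)} := by
      intro i x hx
      rw [hPmeq i] at hx
      exact ⟨Ioo_subset_Icc_self hx.1, Ioo_subset_Icc_self hx.2.1,
        fun k h0 h1 => Ioo_subset_Icc_self (hx.2.2 k h0 h1)⟩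
    have hsubK : ∀ i, S i ⊆ {x : EuclideanSpace ℝ (Fin d) | x i0 ∈ Icc (u i + w i) (u i + w i + ℓ i) ∧ x i1 ∈ Icc (-(r i)/2) (r i/2) ∧ ∀ k, k ≠ i0 → k ≠ i1 → x k ∈ Icc (-(1:ℝ)/2) (1/2)} ∪ {x : EuclideanSpace ℝ (Fin d) | x i0 ∈ Icc (u i - w i - ℓ i) (u i - w i) ∧ x i1 ∈ Icc (-(r i)/2) (r i/2) ∧ ∀ k, k ≠ i0 → k ≠ i1 → x k ∈ Icc (-(1:ℝ)/2) (1/2)} := by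
      intro i
      rw [hS i]
      exact Set.union_subset_union (hsubKp i) (hsubKm i)
    have hKnull : ∀ i, volume (({x : EuclideanSpace ℝ (Fin d) | x i0 ∈ Icc (u i + w i) (u i + w i + ℓ i) ∧ x i1 ∈ Icc (-(r i)/2) (r i/2) ∧ ∀ k, k ≠ i0 → k ≠ i1 → x k ∈ Icc (-(1:ℝ)/2) (1/2)} ∪ {x : EuclideanSpace ℝ (Fin d) | x i0 ∈ Icc (u i - w i - ℓ i) (u i - w i) ∧ x i1 ∈ Icc (-(r i)/2) (r i/2) ∧ ∀ k, k ≠ i0 → k ≠ i1 → x k ∈ Icc (-(1:ℝ)/2) (1/2)}) \ S i) = 0 := by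
      intro i
      have hKpb := hbox (Icc (u i + w i) (u i + w i + ℓ i)) (Icc (-(r i)/2) (r i/2)) (Icc (-(1:ℝ)/2) (1/2))
        measurableSet_Icc measurableSet_Icc measurableSet_Icc hIccvol
      have hKmb := hbox (Icc (u i - w i - ℓ i) (u i - w i)) (Icc (-(r i)/2) (r i/2)) (Icc (-(1:ℝ)/2) (1/2))
        measurableSet_Icc measurableSet_Icc measurableSet_Icc hIccvol
      have hvKp : volume ({x : EuclideanSpace ℝ (Fin d) | x i0 ∈ Icc (u i + w i) (u i + w i + ℓ i) ∧ x i1 ∈ Icc (-(r i)/2) (r i/2) ∧ ∀ k, k ≠ i0 → k ≠ i1 → x k ∈ Icc (-(1:ℝ)/2) (1/2)}) = ENNReal.ofReal (ℓ i) * ENNReal.ofReal (r i) := by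
        rw [hKpb.2, Real.volume_Icc, Real.volume_Icc,
          show u i + w i + ℓ i - (u i + w i) = ℓ i by ring,
          show r i/2 - -(r i)/2 = r i by ring]
      have hvKm : volume ({x : EuclideanSpace ℝ (Fin d) | x i0 ∈ Icc (u i - w i - ℓ i) (u i - w i) ∧ x i1 ∈ Icc (-(r i)/2) (r i/2) ∧ ∀ k, k ≠ i0 → k ≠ i1 → x k ∈ Icc (-(1:ℝ)/2) (1/2)}) = ENNReal.ofReal (ℓ i) * ENNReal.ofReal (r i) := by
        rw [hKmb.2, Real.volume_Icc, Real.volume_Icc,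
          show u i - w i - (u i - w i - ℓ i) = ℓ i by ring,
          show r i/2 - -(r i)/2 = r i by ring]
      have hPmvol : volume ((fun q => Am i - q) '' Q (ℓ i) (r i)) =
          ENNReal.ofReal (ℓ i) * ENNReal.ofReal (r i) := by
        rw [hPmeq i,
          (hbox _ _ _ measurableSet_Ioo measurableSet_Ioo measurableSet_Ioo hI2vol).2,
          Real.volume_Ioo, Real.volume_Ioo,
          show u i - w i - (u i - w i - ℓ i) = ℓ i by ring,
          show r i/2 - -(r i)/2 = r i by ring]
      have hfin : ENNReal.ofReal (ℓ i) * ENNReal.ofReal (r i) ≠ ⊤ :=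
        ENNReal.mul_ne_top ENNReal.ofReal_ne_top ENNReal.ofReal_ne_top
      have hd1 : volume ({x : EuclideanSpace ℝ (Fin d) | x i0 ∈ Icc (u i + w i) (u i + w i + ℓ i) ∧ x i1 ∈ Icc (-(r i)/2) (r i/2) ∧ ∀ k, k ≠ i0 → k ≠ i1 → x k ∈ Icc (-(1:ℝ)/2) (1/2)} \ (fun q => Ap i + q) '' Q (ℓ i) (r i)) = 0 := by
        rw [measure_diff (hsubKp i) (hPpm i).nullMeasurableSet (by rw [hPpvol i]; exact hfin),
          hvKp, hPpvol i, tsub_self]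
      have hd2 : volume ({x : EuclideanSpace ℝ (Fin d) | x i0 ∈ Icc (u i - w i - ℓ i) (u i - w i) ∧ x i1 ∈ Icc (-(r i)/2) (r i/2) ∧ ∀ k, k ≠ i0 → k ≠ i1 → x k ∈ Icc (-(1:ℝ)/2) (1/2)} \ (fun q => Am i - q) '' Q (ℓ i) (r i)) = 0 := by
        rw [measure_diff (hsubKm i) (hPmm i).nullMeasurableSet (by rw [hPmvol]; exact hfin),
          hvKm, hPmvol, tsub_self]
      apply measure_mono_null ?_ (measure_union_null hd1 hd2)
      intro x ⟨hxK, hxS⟩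
      rw [hS i] at hxS
      rcases hxK with hxK | hxK
      · exact Or.inl ⟨hxK, fun hh => hxS (Or.inl hh)⟩
      · exact Or.inr ⟨hxK, fun hh => hxS (Or.inr hh)⟩
    have hZnull : volume {x : EuclideanSpace ℝ (Fin d) | x i1 = 0} = 0 := by
      have he : {x : EuclideanSpace ℝ (Fin d) | x i1 = 0}
          = gbox (fun k => if k = i1 then {(0:ℝ)} else univ) := by
        ext x
        constructor
        · intro hx k
          by_cases hk : k = i1
          · subst hk; simp only [if_pos rfl]; exact hx
          · simp only [if_neg hk]; trivial
        · intro hx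
          have h5 : x i1 ∈ (if i1 = i1 then ({(0:ℝ)} : Set ℝ) else univ) := hx i1
          rw [if_pos rfl] at h5
          exact h5
      have hm : ∀ k : Fin d, MeasurableSet (if k = i1 then ({(0:ℝ)} : Set ℝ) else univ) := by
        intro k
        split_ifs
        · exact measurableSet_singleton 0
        · exact MeasurableSet.univ
      rw [he, volume_gbox _ hm]
      apply Finset.prod_eq_zero (Finset.mem_univ i1)
      rw [if_pos rfl]
      exact Real.volume_singleton
    -- every closure point with nonzero second coordinate lies in some closed box
    have hclA : closure X ⊆ (⋃ i, ({x : EuclideanSpace ℝ (Fin d) | x i0 ∈ Icc (u i + w i) (u i + w i + ℓ i) ∧ x i1 ∈ Icc (-(r i)/2) (r i/2) ∧ ∀ k, k ≠ i0 → k ≠ i1 → x k ∈ Icc (-(1:ℝ)/2) (1/2)} ∪ {x : EuclideanSpace ℝ (Fin d) | x i0 ∈ Icc (u i - w i - ℓ i) (u i - w i) ∧ x i1 ∈ Icc (-(r i)/2) (r i/2) ∧ ∀ k, k ≠ i0 → k ≠ i1 → x k ∈ Icc (-(1:ℝ)/2) (1/2)})) ∪ {x | x i1 = 0} := by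
      intro x hx
      by_cases hx1 : x i1 = 0
      · exact Or.inr hx1
      left
      have hε : 0 < |x i1| / 2 := by positivity
      set ε := |x i1| / 2 with hεdef
      have hclose : ∀ j (y : EuclideanSpace ℝ (Fin d)), y ∈ S j → dist x y < ε →
          2 * ε < r j := by
        intro j y hy hdy
        have h1 := (hSco j y hy).2
        have h2 : |x i1 - y i1| ≤ dist x y := abs_coord_sub_le_dist x y i1
        have h3 : |x i1| ≤ |x i1 - y i1| + |y i1| := by
          calc |x i1| = |(x i1 - y i1) + y i1| := by ring_nf
            _ ≤ |x i1 - y i1| + |y i1| := abs_add_le _ _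
        have h4 : |x i1| = 2 * ε := by rw [hεdef]; ring
        linarith
      have huniq : ∀ j1 j2 (y1 y2 : EuclideanSpace ℝ (Fin d)), y1 ∈ S j1 → y2 ∈ S j2 →
          dist x y1 < ε → dist x y2 < ε → j1 = j2 := by
        have key : ∀ a b (ya yb : EuclideanSpace ℝ (Fin d)), a < b → ya ∈ S a → yb ∈ S b →
            dist x ya < ε → dist x yb < ε → False := by
          intro a b ya yb hab hya hyb hda hdb
          have h1 := abs_le.mp (hSco a ya hya).1
          have h2 := abs_le.mp (hSco b yb hyb).1
          have hra : 2*ε < r a := hclose a ya hya hda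
          have hMa := hrM a
          have hMb := hrM b
          have hsepab := husep a b hab
          have c1 := abs_lt.mp (lt_of_le_of_lt (abs_coord_sub_le_dist x ya i0) hda)
          have c2 := abs_lt.mp (lt_of_le_of_lt (abs_coord_sub_le_dist x yb i0) hdb)
          have f1 : 100 * M a ≤ u b - u a :=
            le_trans (by linarith [le_max_left (M a) (M b)]) hsepab
          have f2 : 100 * M b ≤ u b - u a :=
            le_trans (by linarith [le_max_right (M a) (M b)]) hsepab
          linarith
        intro j1 j2 y1 y2 hy1 hy2 hd1 hd2
        by_contra hne12
        rcases lt_or_gt_of_ne hne12 with h | h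
        · exact key j1 j2 y1 y2 h hy1 hy2 hd1 hd2
        · exact key j2 j1 y2 y1 h hy2 hy1 hd2 hd1
      obtain ⟨y0, hy0X, hy0d⟩ := Metric.mem_closure_iff.mp hx ε hε
      rw [hX] at hy0X
      obtain ⟨iX, hiX⟩ := Set.mem_iUnion.mp hy0X
      refine Set.mem_iUnion.mpr ⟨iX, ?_⟩
      have hxcl : x ∈ closure (S iX) := by
        rw [Metric.mem_closure_iff]
        intro δ hδ
        obtain ⟨z, hzX, hzd⟩ := Metric.mem_closure_iff.mp hx (min δ ε) (lt_min hδ hε)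
        rw [hX] at hzX
        obtain ⟨jz, hjz⟩ := Set.mem_iUnion.mp hzX
        have hjzi : jz = iX :=
          huniq jz iX z y0 hjz hiX (lt_of_lt_of_le hzd (min_le_right _ _)) hy0d
        exact ⟨z, hjzi ▸ hjz, lt_of_lt_of_le hzd (min_le_left _ _)⟩
      exact closure_minimal (hsubK iX) (hKclosed iX) hxcl
    have hac : ρ ≪ volume := by rw [hρ]; exact withDensity_absolutelyContinuous _ _
    have h2 : ρ (closure X \ X) = 0 := by
      apply hac
      apply measure_mono_null ?_
        (measure_union_null (measure_iUnion_null fun i => hKnull i) hZnull)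
      intro x ⟨hxc, hxn⟩
      rcases hclA hxc with hin | hz
      · obtain ⟨i, hi⟩ := Set.mem_iUnion.mp hin
        exact Or.inl (Set.mem_iUnion.mpr ⟨i, hi, fun hh => hxn (hX ▸ Set.mem_iUnion.mpr ⟨i, hh⟩)⟩)
      · exact Or.inr hz
    apply measure_mono_null ?_ (measure_union_null h1 h2)
    intro x hx
    by_cases hxc : x ∈ closure X
    · exact Or.inr ⟨hxc, hx⟩
    · exact Or.inl hxc
  -- ### Part 1 : pushforward
  have hpart1 : ρ.map T = μ := by
    apply Measure.ext
    intro s hs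
    rw [Measure.map_apply hTmeas hs, hμ, Measure.sum_apply _ hs]
    have hcov : ρ (T ⁻¹' s) = ρ (T ⁻¹' s ∩ X) := by
      have h1 : ρ (T ⁻¹' s \ X) = 0 :=
        measure_mono_null (fun x hx => hx.2) hXnull
      rw [← measure_inter_add_diff (T ⁻¹' s) hXm, h1, add_zero]
    rw [hcov, hX, Set.inter_iUnion]
    rw [measure_iUnion ?hdp (fun i => (hTmeas hs).inter (hSm i))]
    case hdp =>
      intro i j hij
      exact ((hdisjS i j hij).mono inter_subset_right inter_subset_right)
    apply tsum_congr
    intro i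
    have hSiTE : T ⁻¹' s ∩ S i =
        (if Bp i ∈ s then S i ∩ Hs else ∅) ∪ (if Bm i ∈ s then S i \ Hs else ∅) := by
      ext x
      constructor
      · rintro ⟨hxT, hxS⟩
        have hxT' : T x ∈ s := hxT
        have hTx : T x = if 0 ≤ x i1 then Bp i else Bm i := hT i x hxS
        by_cases hx1 : 0 ≤ x i1
        · left
          rw [hTx, if_pos hx1] at hxT'
          rw [if_pos hxT']
          exact ⟨hxS, hx1⟩
        · right
          rw [hTx, if_neg hx1] at hxT'
          rw [if_pos hxT']
          exact ⟨hxS, hx1⟩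
      · intro hx
        rcases hx with hx | hx
        · by_cases hBps : Bp i ∈ s
          · rw [if_pos hBps] at hx
            refine ⟨?_, hx.1⟩
            have hTx : T x = if 0 ≤ x i1 then Bp i else Bm i := hT i x hx.1
            have : T x = Bp i := by rw [hTx]; exact if_pos hx.2
            show T x ∈ s
            rw [this]; exact hBps
          · rw [if_neg hBps] at hx; exact absurd hx (Set.notMem_empty x)
        · by_cases hBms : Bm i ∈ s
          · rw [if_pos hBms] at hx
            refine ⟨?_, hx.1⟩
            have hTx : T x = if 0 ≤ x i1 then Bp i else Bm i := hT i x hx.1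
            have hTxm : T x = Bm i := by
              rw [hTx]; exact if_neg hx.2
            show T x ∈ s
            rw [hTxm]; exact hBms
          · rw [if_neg hBms] at hx; exact absurd hx (Set.notMem_empty x)
    rw [hSiTE]
    have hmeas2 : MeasurableSet (if Bm i ∈ s then S i \ Hs else ∅) := by
      split_ifs
      · exact (hSm i).diff hHm
      · exact MeasurableSet.empty
    have hdisj12 : Disjoint (if Bp i ∈ s then S i ∩ Hs else ∅)
        (if Bm i ∈ s then S i \ Hs else ∅) := by
      split_ifs
      · exact (disjoint_sdiff_right.mono inter_subset_right le_rfl)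
      all_goals simp
    rw [measure_union hdisj12 hmeas2]
    have e1 : ρ (if Bp i ∈ s then S i ∩ Hs else ∅) = if Bp i ∈ s then σ i else 0 := by
      split_ifs
      · exact hhalfH i
      · exact measure_empty
    have e2 : ρ (if Bm i ∈ s then S i \ Hs else ∅) = if Bm i ∈ s then σ i else 0 := by
      split_ifs
      · exact hhalfHc i
      · exact measure_empty
    rw [e1, e2, Measure.smul_apply, Measure.add_apply,
      Measure.dirac_apply' _ hs, Measure.dirac_apply' _ hs]
    rw [Set.indicator_apply, Set.indicator_apply]
    simp only [Pi.one_apply, smul_eq_mul]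
    split_ifs <;> simp [mul_add]
  -- ### geometry: T maps each point to the nearest atom
  have hsumsplit : ∀ (x y : EuclideanSpace ℝ (Fin d)), (∀ k, k ≠ i0 → k ≠ i1 → y k = 0) →
      dist x y = Real.sqrt ((x i0 - y i0)^2 + (x i1 - y i1)^2 +
        ∑ k ∈ Finset.univ \ {i0, i1}, (x k)^2) := by
    intro x y hy
    rw [EuclideanSpace.dist_eq]
    congr 1
    have h1 : ∀ k, dist (x k) (y k) ^ 2 = (x k - y k)^2 := fun k => by
      rw [Real.dist_eq, sq_abs]
    simp_rw [h1]
    rw [← Finset.sum_sdiff (Finset.subset_univ {i0, i1}), Finset.sum_pair hne]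
    have h2 : ∑ k ∈ Finset.univ \ {i0, i1}, (x k - y k)^2
        = ∑ k ∈ Finset.univ \ {i0, i1}, (x k)^2 := by
      apply Finset.sum_congr rfl
      intro k hk
      simp only [Finset.mem_sdiff, Finset.mem_insert, Finset.mem_singleton] at hk
      rw [hy k (fun h => hk.2 (Or.inl h)) (fun h => hk.2 (Or.inr h)), sub_zero]
    rw [h2]
    ring
  have hvanp : ∀ j k, k ≠ i0 → k ≠ i1 → Bp j k = 0 := fun j k h0 h1 => by
    rw [hBpco, if_neg h0, if_neg h1]
  have hvanm : ∀ j k, k ≠ i0 → k ≠ i1 → Bm j k = 0 := fun j k h0 h1 => by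
    rw [hBmco, if_neg h0, if_neg h1]
  have hBp0 : ∀ j, Bp j i0 = u j := fun j => by rw [hBpco, if_pos rfl]
  have hBp1 : ∀ j, Bp j i1 = w j := fun j => by
    rw [hBpco, if_neg (Ne.symm hne), if_pos rfl]
  have hBm0 : ∀ j, Bm j i0 = u j := fun j => by rw [hBmco, if_pos rfl]
  have hBm1 : ∀ j, Bm j i1 = -w j := fun j => by
    rw [hBmco, if_neg (Ne.symm hne), if_pos rfl]
  have hcmp : ∀ (x y z : EuclideanSpace ℝ (Fin d)),
      (∀ k, k ≠ i0 → k ≠ i1 → y k = 0) → (∀ k, k ≠ i0 → k ≠ i1 → z k = 0) →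
      (x i0 - y i0)^2 + (x i1 - y i1)^2 ≤ (x i0 - z i0)^2 + (x i1 - z i1)^2 →
      dist x y ≤ dist x z := by
    intro x y z hy hz hle
    rw [hsumsplit x y hy, hsumsplit x z hz]
    exact Real.sqrt_le_sqrt (by linarith)
  have hfar : ∀ i j, j ≠ i → ∀ (x : EuclideanSpace ℝ (Fin d)), |x i0 - u i| ≤ 2 * M i →
      98 * M i ≤ |x i0 - u j| := by
    intro i j hji x hx0
    have h3 := husep2 i j (Ne.symm hji)
    have htri : |u j - u i| ≤ |x i0 - u i| + |x i0 - u j| := by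
      calc |u j - u i| = |(x i0 - u i) - (x i0 - u j)| := by ring_nf
        _ ≤ |x i0 - u i| + |x i0 - u j| := abs_sub _ _
    linarith
  have hnear : ∀ i (x : EuclideanSpace ℝ (Fin d)), x ∈ S i → ∀ j,
      dist x (T x) ≤ dist x (Bp j) ∧ dist x (T x) ≤ dist x (Bm j) := by
    intro i x hx j
    obtain ⟨hx0, hx1⟩ := hSco i x hx
    have hTx : T x = if 0 ≤ x i1 then Bp i else Bm i := hT i x hx
    have hrwi := hwr i
    have hwMi := hwM i
    have hrMi := hrM i
    have hMpos := hM0 i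
    have hri := hr i
    have hwi := hw i
    obtain ⟨ha1, ha2⟩ := abs_le.mp hx1
    by_cases hx1s : 0 ≤ x i1
    · rw [hTx, if_pos hx1s]
      have hown : |x i1 - w i| ≤ M i := by
        rw [abs_le]; constructor <;> linarith
      constructor
      · by_cases hji : j = i
        · subst hji; exact le_rfl
        · apply hcmp _ _ _ (hvanp i) (hvanp j)
          rw [hBp0, hBp0, hBp1]
          exact arith1 hMpos hx0 hown (hfar i j hji x hx0)
      · by_cases hji : j = i
        · subst hji
          apply hcmp _ _ _ (hvanp j) (hvanm j)
          rw [hBp0, hBm0, hBp1, hBm1]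
          exact arith2 (hw j) hx1s _
        · apply hcmp _ _ _ (hvanp i) (hvanm j)
          rw [hBp0, hBm0, hBp1, hBm1]
          exact arith1 hMpos hx0 hown (hfar i j hji x hx0)
    · rw [hTx, if_neg hx1s]
      push_neg at hx1s
      have hown : |x i1 - (-w i)| ≤ M i := by
        rw [abs_le]; constructor <;> linarith
      constructor
      · by_cases hji : j = i
        · subst hji
          apply hcmp _ _ _ (hvanm j) (hvanp j)
          rw [hBp0, hBm0, hBp1, hBm1]
          exact arith3 (hw j) hx1s.le _
        · apply hcmp _ _ _ (hvanm i) (hvanp j)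
          rw [hBm0, hBp0, hBm1]
          exact arith1 hMpos hx0 hown (hfar i j hji x hx0)
      · by_cases hji : j = i
        · subst hji; exact le_rfl
        · apply hcmp _ _ _ (hvanm i) (hvanm j)
          rw [hBm0, hBm0, hBm1, hBm1]
          exact arith1 hMpos hx0 hown (hfar i j hji x hx0)
  -- ### Part 2 : optimality
  refine ⟨hpart1, ?_⟩
  intro S' hS'm hS'map
  have hAtoms : MeasurableSet (Set.range Bp ∪ Set.range Bm) :=
    ((Set.countable_range Bp).union (Set.countable_range Bm)).measurableSet
  have hμAtoms : μ ((Set.range Bp ∪ Set.range Bm)ᶜ) = 0 := by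
    rw [hμ, Measure.sum_apply _ hAtoms.compl]
    refine ENNReal.tsum_eq_zero.mpr fun i => ?_
    have h1 : Bp i ∉ (Set.range Bp ∪ Set.range Bm)ᶜ := fun hmem => hmem (Or.inl ⟨i, rfl⟩)
    have h2 : Bm i ∉ (Set.range Bp ∪ Set.range Bm)ᶜ := fun hmem => hmem (Or.inr ⟨i, rfl⟩)
    rw [Measure.smul_apply, Measure.add_apply, Measure.dirac_apply' _ hAtoms.compl,
      Measure.dirac_apply' _ hAtoms.compl,
      Set.indicator_of_notMem h1, Set.indicator_of_notMem h2]
    simp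
  have haeX : ∀ᵐ x ∂ρ, x ∈ X := by
    rw [ae_iff]
    exact hXnull
  have haeA : ∀ᵐ x ∂ρ, S' x ∈ Set.range Bp ∪ Set.range Bm := by
    rw [ae_iff]
    have : {x | ¬ S' x ∈ Set.range Bp ∪ Set.range Bm}
        = S' ⁻¹' (Set.range Bp ∪ Set.range Bm)ᶜ := rfl
    rw [this, ← Measure.map_apply hS'm hAtoms.compl, hS'map]
    exact hμAtoms
  apply lintegral_mono_ae
  filter_upwards [haeX, haeA] with x hxX hxA
  apply ENNReal.ofReal_le_ofReal
  rw [hX] at hxX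
  obtain ⟨i, hi⟩ := Set.mem_iUnion.mp hxX
  have hdle : dist x (T x) ≤ dist x (S' x) := by
    rcases hxA with ⟨j, hj⟩ | ⟨j, hj⟩
    · rw [← hj]; exact (hnear i x hi j).1
    · rw [← hj]; exact (hnear i x hi j).2
  exact pow_le_pow_left₀ dist_nonneg hdle 2
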